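/- arXiv:0912.1414 — 2 statements merged into one kernel-verified Lean document; each statement's English description precedes it below -/
import Mathlib

section
/- Let p be an odd prime, ζ_p a primitive p-th root of unity, and π = ζ_p − 1. Then p ≡ −π^{p−1} (mod π^p); that is, p + (ζ_p − 1)^{p−1} belongs to the ideal (ζ_p − 1)^p of ℤ[ζ_p]. -/
open Finset

private lemma aux_prod_add_mul {R : Type} [CommRing R] (x : R) (f g : ℕ → R)
    (s : Finset ℕ) : ∃ c : R, ∏ i ∈ s, (f i + x * g i) = (∏ i ∈ s, f i) + x * c := by
  classical
  induction s using Finset.induction with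
  | empty => exact ⟨0, by simp⟩
  | @insert a s h ih =>
    obtain ⟨c, hc⟩ := ih
    exact ⟨g a * ∏ i ∈ s, f i + (f a + x * g a) * c, by
      rw [Finset.prod_insert h, Finset.prod_insert h, hc]; ring⟩

/-- **`p ≡ −π^{p−1} (mod π^p)` where `π = ζ_p − 1`.**
Let `p` be an odd prime and `ζ` a primitive `p`-th root of unity (in any integral
domain `R`, e.g. the ring of integers `ℤ[ζ_p]` of the `p`-th cyclotomic field).
Then `p + (ζ − 1)^(p−1)` belongs to the `p`-th power of the ideal `(ζ − 1)`. -/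
theorem prime_add_zeta_sub_one_pow_mem
    (p : ℕ) (hp : p.Prime) (hodd : Odd p)
    (R : Type) [CommRing R] [IsDomain R] (ζ : R) (hζ : IsPrimitiveRoot ζ p) :
    (p : R) + (ζ - 1) ^ (p - 1) ∈ Ideal.span {ζ - 1} ^ p := by
  obtain ⟨n, rfl⟩ : ∃ n, p = n + 1 := ⟨p - 1, (Nat.succ_pred_eq_of_pos hp.pos).symm⟩
  have hn1 : 1 ≤ n := by
    rcases Nat.lt_or_ge n 1 with h | h
    · interval_cases n; exact absurd hp (by norm_num)
    · exact h
  rw [Ideal.span_singleton_pow, Ideal.mem_span_singleton, Nat.add_sub_cancel]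
  set π := ζ - 1 with hπ
  -- key product formula : (-1)^n * ∏ (ζ^(k+1) - 1) = n + 1
  have key := hζ.prod_pow_sub_one_eq_order
  have heven : Even n := Nat.Odd.sub_odd hodd odd_one
  rw [heven.neg_one_pow, one_mul] at key
  -- factor each ζ^(k+1) - 1 as (geometric sum) * π
  have hfac : ∀ k, ζ ^ (k + 1) - 1 = (∑ j ∈ range (k + 1), ζ ^ j) * π :=
    fun k => (geom_sum_mul ζ (k + 1)).symm
  -- each geometric sum is (k+1) + π * b k
  have hgeom : ∀ k, ∑ j ∈ range (k + 1), ζ ^ j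
      = ((k + 1 : ℕ) : R) + π * ∑ j ∈ range (k + 1), ∑ l ∈ range j, ζ ^ l := by
    intro k
    have h1 : ∀ j, ζ ^ j = 1 + π * ∑ l ∈ range j, ζ ^ l := fun j => by
      have := geom_sum_mul ζ j
      rw [hπ]; linear_combination -this
    calc ∑ j ∈ range (k + 1), ζ ^ j
        = ∑ j ∈ range (k + 1), (1 + π * ∑ l ∈ range j, ζ ^ l) := by
          exact Finset.sum_congr rfl fun j _ => h1 j
      _ = ((k + 1 : ℕ) : R) + π * ∑ j ∈ range (k + 1), ∑ l ∈ range j, ζ ^ l := by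
          rw [Finset.sum_add_distrib, Finset.mul_sum]; simp
  -- rewrite the product
  obtain ⟨c, hc⟩ := aux_prod_add_mul π (fun k => ((k + 1 : ℕ) : R))
    (fun k => ∑ j ∈ range (k + 1), ∑ l ∈ range j, ζ ^ l) (range n)
  have hprodfac : (∏ k ∈ range n, ((k + 1 : ℕ) : R)) = (n.factorial : R) := by
    rw [← Nat.cast_prod]
    exact_mod_cast congrArg (Nat.cast (R := R)) (Finset.prod_range_add_one_eq_factorial n)
  have hstar : ((n + 1 : ℕ) : R) = π ^ n * ((n.factorial : R) + π * c) := by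
    rw [Nat.cast_add, Nat.cast_one, ← key]
    calc ∏ k ∈ range n, (ζ ^ (k + 1) - 1)
        = ∏ k ∈ range n, ((((k + 1 : ℕ) : R) + π * ∑ j ∈ range (k + 1),
            ∑ l ∈ range j, ζ ^ l) * π) := by
          exact Finset.prod_congr rfl fun k _ => by rw [hfac k, hgeom k]
      _ = (∏ k ∈ range n, (((k + 1 : ℕ) : R) + π * ∑ j ∈ range (k + 1),
            ∑ l ∈ range j, ζ ^ l)) * π ^ n := by
          rw [Finset.prod_mul_distrib, Finset.prod_const, card_range]
      _ = π ^ n * ((n.factorial : R) + π * c) := by rw [hc, hprodfac, mul_comm]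
  -- Wilson's theorem : (n+1) ∣ n! + 1
  haveI : Fact (n + 1).Prime := ⟨hp⟩
  obtain ⟨m, hm⟩ : (n + 1) ∣ n.factorial + 1 := by
    have hw := ZMod.wilsons_lemma (p := n + 1)
    rw [Nat.add_sub_cancel] at hw
    have : ((n.factorial + 1 : ℕ) : ZMod (n + 1)) = 0 := by push_cast [hw]; ring
    exact (ZMod.natCast_eq_zero_iff _ _).mp this
  have hw : (n.factorial : R) + 1 = ((n + 1 : ℕ) : R) * (m : R) := by
    exact_mod_cast congrArg (Nat.cast (R := R)) hm
  have hrw : ((n + 1 : ℕ) : R) + π ^ n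
      = π ^ n * π ^ n * (((n.factorial : R) + π * c) * (m : R)) + π ^ (n + 1) * c := by
    linear_combination (1 + π ^ n * (m : R)) * hstar + π ^ n * hw
  rw [hrw]
  refine dvd_add (dvd_mul_of_dvd_left ?_ _) (dvd_mul_right _ _)
  rw [← pow_add]
  exact pow_dvd_pow _ (by omega)
end

section
/- Let p be an odd prime, ζ_p a primitive p-th root of unity, π = ζ_p − 1, and let g = Σ_{t=1}^{p−1} (t/p) ζ_p^t be the quadratic Gauss sum over F_p, where (t/p) is the Legendre symbol. Then ((p−1)/2)! · g ≡ −π^{(p−1)/2} (mod π^{(p+1)/2}); that is, ((p−1)/2)!·g + (ζ_p − 1)^{(p−1)/2} lies in the ideal (ζ_p − 1)^{(p+1)/2} of ℤ[ζ_p]. (Recall g = √(p*) with p* = (−1)^{(p−1)/2} p.) -/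
open Finset

lemma aux_desc (k t : ℕ) :
    ((k.factorial * t.choose k : ℕ) : ℤ) = ∏ i ∈ Finset.range k, ((t : ℤ) - i) := by
  rcases lt_or_ge t k with h | h
  · rw [Nat.choose_eq_zero_of_lt h, mul_zero, Nat.cast_zero]
    exact (Finset.prod_eq_zero (Finset.mem_range.mpr h) (by simp)).symm
  · rw [← Nat.descFactorial_eq_factorial_mul_choose, Nat.descFactorial_eq_prod_range]
    push_cast
    refine Finset.prod_congr rfl fun i hi => ?_
    rw [Nat.cast_sub (le_trans (Nat.le_of_lt_succ (Nat.lt_succ_of_lt (mem_range.mp hi))) h)]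

lemma aux_sum_pow (p : ℕ) [Fact p.Prime] {n : ℕ} (h1 : 1 ≤ n) (h2 : n ≤ p - 1) :
    ∑ x : ZMod p, x ^ n = if n = p - 1 then -1 else 0 := by
  have hp : 1 < p := (Fact.out : p.Prime).one_lt
  rcases eq_or_lt_of_le h2 with he | hl
  · rw [if_pos he, he]
    have : ∀ x : ZMod p, x ^ (p - 1) = if x = 0 then 0 else 1 := by
      intro x
      split_ifs with h
      · rw [h, zero_pow]; omega
      · exact ZMod.pow_card_sub_one_eq_one h
    simp_rw [this]
    have h0 : ∀ x : ZMod p, (if x = 0 then (0:ZMod p) else 1) = 1 - (if x = 0 then 1 else 0) := by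
      intro x; split_ifs <;> ring
    simp_rw [h0]
    rw [Finset.sum_sub_distrib, Finset.sum_ite_eq' Finset.univ (0 : ZMod p) (fun _ => (1 : ZMod p)),
      if_pos (Finset.mem_univ _), Finset.sum_const, Finset.card_univ, ZMod.card, nsmul_eq_mul,
      mul_one, ZMod.natCast_self, zero_sub]
  · rw [if_neg (by omega)]
    have := FiniteField.sum_pow_lt_card_sub_one (ZMod p) n (by rwa [ZMod.card])
    exact this

lemma aux_sum_pow_prod (p : ℕ) [Fact p.Prime] (m k : ℕ) (hp : p = 2 * m + 1) (hm : 1 ≤ m)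
    (hk : k ≤ m) :
    ∑ x : ZMod p, x ^ m * ∏ i ∈ Finset.range k, (x - (i : ZMod p)) =
      if k = m then -1 else 0 := by
  have expand : ∀ x : ZMod p, x ^ m * ∏ i ∈ Finset.range k, (x - (i : ZMod p)) =
      ∑ s ∈ (Finset.range k).powerset, x ^ (m + s.card) * ∏ i ∈ Finset.range k \ s, (-(i : ZMod p)) := by
    intro x
    have : ∏ i ∈ Finset.range k, (x - (i : ZMod p)) = ∏ i ∈ Finset.range k, (x + (-(i : ZMod p))) := by
      refine Finset.prod_congr rfl fun i _ => by ring
    rw [this, Finset.prod_add, Finset.mul_sum]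
    refine Finset.sum_congr rfl fun s _ => ?_
    rw [Finset.prod_const, pow_add, mul_assoc]
  simp_rw [expand]
  rw [Finset.sum_comm]
  have hterm : ∀ s ∈ (Finset.range k).powerset,
      (∑ x : ZMod p, x ^ (m + s.card) * ∏ i ∈ Finset.range k \ s, (-(i : ZMod p))) =
      if s = Finset.range k ∧ k = m then -1 else 0 := by
    intro s hs
    have hsub := Finset.mem_powerset.mp hs
    have hcard : s.card ≤ k := le_trans (Finset.card_le_card hsub) (by rw [Finset.card_range])
    rw [← Finset.sum_mul, aux_sum_pow p (by omega) (by omega)]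
    by_cases hc : m + s.card = p - 1
    · have hckm : s.card = m := by omega
      have hkm : k = m := by omega
      have hsrange : s = Finset.range k := by
        refine Finset.eq_of_subset_of_card_le hsub ?_
        rw [Finset.card_range]; omega
      rw [if_pos hc, if_pos ⟨hsrange, hkm⟩, hsrange, Finset.sdiff_self,
        Finset.prod_empty, mul_one]
    · rw [if_neg hc, zero_mul, if_neg]
      rintro ⟨rfl, rfl⟩
      rw [Finset.card_range] at hc; omega
  rw [Finset.sum_congr rfl hterm]
  by_cases hkm : k = m
  · simp only [hkm, and_true, if_true]
    rw [Finset.sum_ite_eq' (Finset.range m).powerset (Finset.range m) (fun _ => (-1 : ZMod p)),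
      if_pos (Finset.mem_powerset_self _)]
  · simp [hkm]

lemma aux_key (p : ℕ) [Fact p.Prime] (m k : ℕ) (hp : p = 2 * m + 1) (hm : 1 ≤ m) (hk : k ≤ m) :
    (((k.factorial : ℤ) * ∑ t ∈ Finset.Icc 1 (p - 1),
        legendreSym p (t : ℤ) * (t.choose k : ℤ) : ℤ) : ZMod p) = if k = m then -1 else 0 := by
  have hp2 : p / 2 = m := by omega
  have step1 : ∀ t : ℕ, (((k.factorial : ℤ) * (legendreSym p (t : ℤ) * (t.choose k : ℤ)) : ℤ) : ZMod p)
      = (t : ZMod p) ^ m * ∏ i ∈ Finset.range k, ((t : ZMod p) - (i : ZMod p)) := by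
    intro t
    have h1 : ((legendreSym p (t : ℤ) : ℤ) : ZMod p) = (t : ZMod p) ^ m := by
      rw [legendreSym.eq_pow, hp2]; push_cast; ring
    have h2 : (((k.factorial : ℤ) * (t.choose k : ℤ) : ℤ) : ZMod p)
        = ∏ i ∈ Finset.range k, ((t : ZMod p) - (i : ZMod p)) := by
      have := aux_desc k t
      push_cast at this
      rw [this]
      push_cast
      rfl
    calc (((k.factorial : ℤ) * (legendreSym p (t : ℤ) * (t.choose k : ℤ)) : ℤ) : ZMod p)
        = ((legendreSym p (t : ℤ) : ℤ) : ZMod p) * (((k.factorial : ℤ) * (t.choose k : ℤ) : ℤ) : ZMod p) := by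
          push_cast; ring
      _ = _ := by rw [h1, h2]
  rw [Finset.mul_sum, Int.cast_sum]
  rw [Finset.sum_congr rfl (fun t _ => step1 t)]
  have hF0 : (0 : ZMod p) ^ m * ∏ i ∈ Finset.range k, ((0 : ZMod p) - (i : ZMod p)) = 0 := by
    rw [zero_pow (by omega), zero_mul]
  have reindex : ∑ t ∈ Finset.Icc 1 (p - 1),
      (t : ZMod p) ^ m * ∏ i ∈ Finset.range k, ((t : ZMod p) - (i : ZMod p))
      = ∑ x : ZMod p, x ^ m * ∏ i ∈ Finset.range k, (x - (i : ZMod p)) := by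
    rw [← Finset.add_sum_erase Finset.univ _ (Finset.mem_univ (0 : ZMod p)), hF0, zero_add]
    refine Finset.sum_nbij' (i := fun t => ((t : ZMod p))) (j := ZMod.val) ?_ ?_ ?_ ?_ ?_
    · intro t ht
      rw [Finset.mem_Icc] at ht
      refine Finset.mem_erase.mpr ⟨?_, Finset.mem_univ _⟩
      intro h
      have h' : ((t : ℕ) : ZMod p) = 0 := h
      have := ZMod.val_cast_of_lt (show t < p by omega)
      rw [h', ZMod.val_zero] at this
      omega
    · intro x hx
      rw [Finset.mem_erase] at hx
      rw [Finset.mem_Icc]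
      have h1 : x.val ≠ 0 := fun h => hx.1 ((ZMod.val_eq_zero x).mp h)
      have h2 : x.val < p := ZMod.val_lt x
      omega
    · intro t ht
      rw [Finset.mem_Icc] at ht
      exact ZMod.val_cast_of_lt (by omega)
    · intro x _
      exact ZMod.natCast_rightInverse x
    · intro t _
      rfl
  rw [reindex]
  exact aux_sum_pow_prod p m k hp hm hk

/-- **Stickelberger-type congruence for the quadratic Gauss sum.**
Let `p` be an odd prime, `ζ` a primitive `p`-th root of unity (in any integral domain
`R`, e.g. the ring of integers `ℤ[ζ_p]` of the `p`-th cyclotomic field), `π = ζ − 1`,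
and let `g = ∑_{t=1}^{p−1} (t/p) ζ^t` be the quadratic Gauss sum over `F_p`, where
`(t/p)` is the Legendre symbol (so `g = √(p*)` with `p* = (−1)^((p−1)/2)·p`).
Then `((p−1)/2)!·g ≡ −π^((p−1)/2) (mod π^((p+1)/2))`, i.e.
`((p−1)/2)!·g + (ζ − 1)^((p−1)/2)` lies in the `((p+1)/2)`-th power of the ideal
`(ζ − 1)`. -/
theorem factorial_mul_quadratic_gauss_sum_congruence
    (p : ℕ) [Fact p.Prime] (hodd : Odd p)
    (R : Type) [CommRing R] [IsDomain R] (ζ : R) (hζ : IsPrimitiveRoot ζ p) :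
    (((p - 1) / 2).factorial : R) *
        (∑ t ∈ Finset.Icc 1 (p - 1), (legendreSym p (t : ℤ) : R) * ζ ^ t) +
      (ζ - 1) ^ ((p - 1) / 2) ∈ Ideal.span {ζ - 1} ^ ((p + 1) / 2) := by
  obtain ⟨m, hm⟩ := hodd
  have hppr : p.Prime := Fact.out
  have hp2 : 2 ≤ p := hppr.two_le
  have hm1 : 1 ≤ m := by omega
  have h1 : (p - 1) / 2 = m := by omega
  have h2 : (p + 1) / 2 = m + 1 := by omega
  have hmp : p = 2 * m + 1 := by omega
  rw [h1, h2, Ideal.span_singleton_pow, Ideal.mem_span_singleton]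
  set π : R := ζ - 1 with hπ
  set T : ℕ → ℤ := fun k => ∑ t ∈ Finset.Icc 1 (p - 1),
    legendreSym p (t : ℤ) * (t.choose k : ℤ) with hT
  -- divisibility of p by π ^ (m+1)
  obtain ⟨z, -, hz⟩ := hζ.self_sub_one_pow_dvd_order (show p - 1 < p by omega) 
  have hpdvd : π ^ (m + 1) ∣ (p : R) := by
    rw [hz]
    exact Dvd.dvd.mul_left (pow_dvd_pow π (by omega)) z
  -- binomial expansion of ζ ^ t
  have hzeta : ζ = π + 1 := by rw [hπ]; ring
  have hpow : ∀ t ∈ Finset.Icc 1 (p - 1),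
      ζ ^ t = ∑ k ∈ Finset.range p, (t.choose k : R) * π ^ k := by
    intro t ht
    rw [Finset.mem_Icc] at ht
    rw [hzeta, add_pow]
    rw [← Finset.sum_subset (Finset.range_subset_range.mpr (show t + 1 ≤ p by omega))
      (fun k _ hk2 => by
        rw [Nat.choose_eq_zero_of_lt (by simpa using hk2), Nat.cast_zero, zero_mul])]
    exact Finset.sum_congr rfl fun k _ => by rw [one_pow]; ring
  -- rearrangement
  have main_eq : (m.factorial : R) *
      (∑ t ∈ Finset.Icc 1 (p - 1), (legendreSym p (t : ℤ) : R) * ζ ^ t)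
      = ∑ k ∈ Finset.range p, (((m.factorial : ℤ) * T k : ℤ) : R) * π ^ k := by
    rw [Finset.mul_sum]
    have h' : ∀ t ∈ Finset.Icc 1 (p - 1),
        (m.factorial : R) * ((legendreSym p (t : ℤ) : R) * ζ ^ t)
        = ∑ k ∈ Finset.range p,
            (m.factorial : R) * (legendreSym p (t : ℤ) : R) * (t.choose k : R) * π ^ k := by
      intro t ht
      rw [hpow t ht, Finset.mul_sum, Finset.mul_sum]
      exact Finset.sum_congr rfl fun k _ => by ring
    rw [Finset.sum_congr rfl h', Finset.sum_comm]
    refine Finset.sum_congr rfl fun k _ => ?_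
    rw [← Finset.sum_mul]
    congr 1
    rw [hT]
    push_cast
    rw [Finset.mul_sum]
    exact Finset.sum_congr rfl fun t _ => by ring
  rw [main_eq]
  have hmem : m ∈ Finset.range p := by simp; omega
  rw [← Finset.sum_erase_add (Finset.range p) _ hmem, add_assoc]
  have hlast : π ^ (m + 1) ∣ (((m.factorial : ℤ) * T m : ℤ) : R) * π ^ m + π ^ m := by
    have hk := aux_key p m m hmp hm1 le_rfl
    rw [if_pos rfl] at hk
    have hk' : (((m.factorial : ℤ) * T m : ℤ) : ZMod p) = -1 := hk
    have hd : (p : ℤ) ∣ (m.factorial : ℤ) * T m + 1 := by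
      rw [← ZMod.intCast_zmod_eq_zero_iff_dvd, Int.cast_add, Int.cast_one, hk']
      ring
    obtain ⟨c, hc⟩ := hd
    have heq : (((m.factorial : ℤ) * T m : ℤ) : R) * π ^ m + π ^ m
        = (p : R) * (c : R) * π ^ m := by
      have h3 : (m.factorial : ℤ) * T m = (p : ℤ) * c - 1 := by omega
      rw [h3]
      push_cast
      ring
    rw [heq]
    exact dvd_mul_of_dvd_left (hpdvd.trans (dvd_mul_right _ _)) _
  refine dvd_add (Finset.dvd_sum ?_) hlast
  intro k hk
  rw [Finset.mem_erase, Finset.mem_range] at hk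
  obtain ⟨hne, hklt⟩ := hk
  rcases lt_or_ge k m with h | h
  · have hk0 := aux_key p m k hmp hm1 h.le
    rw [if_neg hne] at hk0
    have hd0 : (p : ℤ) ∣ (k.factorial : ℤ) * T k :=
      (ZMod.intCast_zmod_eq_zero_iff_dvd _ _).mp hk0
    have hprime : Prime ((p : ℤ)) := Nat.prime_iff_prime_int.mp hppr
    have hdT : (p : ℤ) ∣ T k := by
      rcases (hprime.dvd_mul).mp hd0 with h' | h'
      · exfalso
        rw [Int.natCast_dvd_natCast] at h'
        have := (Nat.Prime.dvd_factorial hppr).mp h'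
        omega
      · exact h'
    obtain ⟨c, hc⟩ := hdT
    have heq : (((m.factorial : ℤ) * T k : ℤ) : R) * π ^ k
        = (p : R) * ((m.factorial : R) * (c : R) * π ^ k) := by
      rw [hc]; push_cast; ring
    rw [heq]
    exact (hpdvd.trans (dvd_mul_right _ _))
  · exact Dvd.dvd.mul_left (pow_dvd_pow π (by omega)) _
end
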